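/- T-periodic points are dense in the attractor A_T, and T : A_T → A_T has a dense orbit; in particular A_T is uncountable. -/

import Mathlib

open scoped Classical
open MeasureTheory Filter

noncomputable section

/-- A complete, locally compact non-Archimedean field with residue field of
order `q`, absolute value normalized so that a uniformizer has norm `1/q`.
`reps` is a set of `q` coset representatives for the residue field: they cover
the ring of integers by discs of radius `1/q` and are pairwise at distance
`> 1/q`. -/
structure NAField (K : Type*) [NormedField K] where
  na : IsNonarchimedean (fun x : K => ‖x‖)
  complete : CompleteSpace K
  locCompact : LocallyCompactSpace K
  q : ℕ
  one_lt_q : 1 < q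
  valGroup : ∀ x : K, x ≠ 0 → ∃ n : ℤ, ‖x‖ = (q : ℝ) ^ n
  exists_unif : ∃ ϖ : K, ‖ϖ‖ = (q : ℝ)⁻¹
  reps : Finset K
  card_reps : reps.card = q
  norm_reps : ∀ s ∈ reps, ‖s‖ ≤ 1
  reps_cover : ∀ x : K, ‖x‖ ≤ 1 → ∃ s ∈ reps, ‖x - s‖ ≤ (q : ℝ)⁻¹
  reps_sep : ∀ s ∈ reps, ∀ t ∈ reps, s ≠ t → (q : ℝ)⁻¹ < ‖s - t‖

variable {K : Type*} [NormedField K]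

/-- `f : R → R` is `(1/q)`-Lipschitz on the ring of integers. -/
def NAField.IsLip (F : NAField K) (f : K → K) : Prop :=
  (∀ t : K, ‖t‖ ≤ 1 → ‖f t‖ ≤ 1) ∧
  ∀ t₁ t₂ : K, ‖t₁‖ ≤ 1 → ‖t₂‖ ≤ 1 → ‖f t₁ - f t₂‖ ≤ ((F.q : ℝ))⁻¹ * ‖t₁ - t₂‖

/-- The unit polydisc `R² ⊆ K²`. -/
def unitPoly (K : Type*) [NormedField K] : Set (K × K) := {p | ‖p.1‖ ≤ 1 ∧ ‖p.2‖ ≤ 1}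

/-- Horizontal `δ`-neighborhood `H_δ(f) = {(t, f t + θ) : t ∈ R, |θ| ≤ δ}`. -/
def Hnbhd (f : K → K) (δ : ℝ) : Set (K × K) :=
  {p | ∃ t θ : K, ‖t‖ ≤ 1 ∧ ‖θ‖ ≤ δ ∧ p = (t, f t + θ)}

/-- Vertical `δ`-neighborhood `V_δ(f) = {(f t + θ, t) : t ∈ R, |θ| ≤ δ}`. -/
def Vnbhd (f : K → K) (δ : ℝ) : Set (K × K) :=
  {p | ∃ t θ : K, ‖t‖ ≤ 1 ∧ ‖θ‖ ≤ δ ∧ p = (f t + θ, t)}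

/-- The automorphism `T(x,y) = (a y + b (x^q - x), x)`. -/
def NAField.Tmap (F : NAField K) (a b : K) : K × K → K × K :=
  fun p => (a * p.2 + b * (p.1 ^ F.q - p.1), p.1)

/-- The inverse automorphism `T⁻¹(x,y) = (y, a⁻¹ (x - b (y^q - y)))`. -/
def NAField.Tinv (F : NAField K) (a b : K) : K × K → K × K :=
  fun p => (p.2, a⁻¹ * (p.1 - b * (p.2 ^ F.q - p.2)))

/-- The attractor `A_T = ⋂_{n ≥ 1} Tⁿ(R²)`. -/
def NAField.Attractor (F : NAField K) (a b : K) : Set (K × K) :=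
  ⋂ n ∈ {n : ℕ | 1 ≤ n}, (F.Tmap a b)^[n] '' unitPoly K

/-- The basin of attraction `B_T = ⋃_{n ≥ 1} T⁻ⁿ(R²)`. -/
def NAField.Basin (F : NAField K) (a b : K) : Set (K × K) :=
  ⋃ n ∈ {n : ℕ | 1 ≤ n}, (F.Tmap a b)^[n] ⁻¹' unitPoly K

/-- `T^k` for `k : ℤ`. -/
def NAField.iterZ (F : NAField K) (a b : K) (k : ℤ) : K × K → K × K :=
  if 0 ≤ k then (F.Tmap a b)^[k.toNat] else (F.Tinv a b)^[(-k).toNat]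

/-- The image under the conjugacy `ω` of the cylinder set of bisequences
agreeing with `s` on coordinates `-M, …, M`: points of the attractor whose
itinerary through the residue strips matches `s` on those coordinates. -/
def NAField.Cyl (F : NAField K) (a b : K) (s : ℤ → K) (M : ℕ) : Set (K × K) :=
  {p | p ∈ F.Attractor a b ∧
    ∀ k : ℤ, |k| ≤ (M : ℤ) → ‖(F.iterZ a b k p).1 - s k‖ ≤ ((F.q : ℝ))⁻¹}

/-! Write `uₖ` for the first coordinate along an orbit, so that `T` becomes the recurrence
`uₖ₊₁ = a uₖ₋₁ + b (uₖ^q - uₖ)`. Since the residue field has `q` elements, `x ↦ x^q - x` maps `R`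
into the disc of radius `1/q` and is an isometry on every residue disc, while `|b| = q`. Hence
two orbits in `R` whose terms lie in the same residue discs for `|k| ≤ M` are `q^(|k|-M-1)`-close
there (expansivity), and every sequence of residue discs is followed by exactly one orbit, the
fixed point of the contraction `uₖ ↦ uₖ^q - (uₖ₊₁ - a uₖ₋₁) / b` (shadowing). As `A_T` consists of
the states `(u₀, u₋₁)` of orbits in `R`, `T` on `A_T` is the full shift on `q` symbols: periodic
itineraries give periodic points, an itinerary containing every finite word gives a dense orbit,
and distinct itineraries give distinct points. -/

namespace IsUltrametricDist

variable {S : Type*} [SeminormedAddGroup S] [IsUltrametricDist S]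

lemma norm_sub_le_max (x y : S) : ‖x - y‖ ≤ max ‖x‖ ‖y‖ := by
  simpa [sub_eq_add_neg] using norm_add_le_max x (-y)

lemma norm_sub_le_of_le_of_le {x y z : S} {c : ℝ} (h₁ : ‖x - y‖ ≤ c) (h₂ : ‖y - z‖ ≤ c) :
    ‖x - z‖ ≤ c := by
  simpa using (norm_add_le_max (x - y) (y - z)).trans (max_le h₁ h₂)

end IsUltrametricDist

lemma exists_periodic_eq_on_window (M : ℕ) :
    ∃ g : ℤ → ℤ, Function.Periodic g (2 * M + 1 : ℕ) ∧ ∀ k : ℤ, |k| ≤ M → g k = k := by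
  refine ⟨fun k => (k + M) % (2 * M + 1 : ℕ) - M, fun k => ?_, fun k hk => ?_⟩
  · simp only [add_right_comm k, Int.add_emod_right]
  · rw [abs_le] at hk
    simp only
    rw [Int.emod_eq_of_lt (by omega) (by push_cast; omega), add_sub_cancel_right]

theorem exists_seq_forall_list {α : Type*} [Inhabited α] (w : ℕ → List α) :
    ∃ s : ℕ → α, ∀ j, ∃ o, ∀ i (hi : i < (w j).length), s (o + i) = (w j)[i] := by
  classical
  -- word `j` starts at position `o j` and is followed by one unused position
  set o : ℕ → ℕ := fun j => ∑ i ∈ Finset.range j, ((w i).length + 1)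
  have ho (j : ℕ) : o (j + 1) = o j + (w j).length + 1 := Finset.sum_range_succ _ j
  have hmono : Monotone o := monotone_nat_of_le_succ fun j => by rw [ho]; omega
  have hdisj {j j' i i' : ℕ} (hi : i < (w j).length) (hi' : i' < (w j').length)
      (h : o j + i = o j' + i') : j = j' := by
    by_contra hne
    rcases Nat.lt_or_gt_of_ne hne with hlt | hlt <;>
    · have := hmono (Nat.succ_le_of_lt hlt)
      rw [ho] at this
      omega
  refine ⟨fun m => if h : ∃ j i, i < (w j).length ∧ o j + i = m
    then (w h.choose).getD (m - o h.choose) default else default, fun j => ⟨o j, fun i hi => ?_⟩⟩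
  have h : ∃ j' i', i' < (w j').length ∧ o j' + i' = o j + i := ⟨j, i, hi, rfl⟩
  obtain ⟨i', hi', hji'⟩ := h.choose_spec
  have hj : h.choose = j := hdisj hi' hi hji'
  simp only [dif_pos h, hj, add_tsub_cancel_left, List.getD_eq_getElem _ _ hi]

theorem exists_bisequence_forall_window {α : Type*} [Countable α] [Nonempty α] :
    ∃ s : ℤ → α, ∀ (σ : ℤ → α) (M : ℕ), ∃ n : ℕ, ∀ k : ℤ, |k| ≤ M → s (k + n) = σ k := by
  inhabit α
  obtain ⟨e, he⟩ := exists_surjective_nat (List α)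
  obtain ⟨s, hs⟩ := exists_seq_forall_list e
  refine ⟨fun k => s k.toNat, fun σ M => ?_⟩
  obtain ⟨j, hj⟩ := he (List.ofFn fun i : Fin (2 * M + 1) => σ (i - M))
  obtain ⟨o, ho⟩ := hs j
  refine ⟨o + M, fun k hk => ?_⟩
  rw [abs_le] at hk
  have hi : (k + M).toNat < (e j).length := by rw [hj, List.length_ofFn]; omega
  have hidx : (k + (o + M : ℕ)).toNat = o + (k + M).toNat := by omega
  simp only [hidx, ho _ hi, hj, List.getElem_ofFn]
  congr 1
  omega

section UnitBall

variable (K) [IsUltrametricDist K]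

def unitBall : Subring K where
  carrier := {x | ‖x‖ ≤ 1}
  mul_mem' {x y} hx hy := by simpa using mul_le_one₀ hx (norm_nonneg y) hy
  one_mem' := by simp
  add_mem' hx hy := (IsUltrametricDist.norm_add_le_max _ _).trans (max_le hx hy)
  zero_mem' := by simp
  neg_mem' := by simp

variable {K} in
@[simp] lemma mem_unitBall {x : K} : x ∈ unitBall K ↔ ‖x‖ ≤ 1 := Iff.rfl

def unitBallMaxIdeal : Ideal (unitBall K) where
  carrier := {x | ‖(x : K)‖ < 1}
  add_mem' {x y} hx hy := (IsUltrametricDist.norm_add_le_max (x : K) y).trans_lt (max_lt hx hy)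
  zero_mem' := by simp
  smul_mem' c x hx := by
    simpa using (mul_le_of_le_one_left (norm_nonneg _) c.2).trans_lt hx

variable {K} in
lemma mem_unitBallMaxIdeal {x : unitBall K} : x ∈ unitBallMaxIdeal K ↔ ‖(x : K)‖ < 1 := Iff.rfl

instance : (unitBallMaxIdeal K).IsMaximal := by
  rw [Ideal.isMaximal_iff]
  refine ⟨by simp [mem_unitBallMaxIdeal], fun J x hle hx hxJ => ?_⟩
  have hx1 : ‖(x : K)‖ = 1 := le_antisymm x.2 (not_lt.1 hx)
  have hx0 : (x : K) ≠ 0 := norm_ne_zero_iff.1 (hx1 ▸ one_ne_zero)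
  have hinv : (x : K)⁻¹ ∈ unitBall K := by simp [hx1]
  convert J.mul_mem_left ⟨_, hinv⟩ hxJ
  ext
  simp [hx0]

abbrev ResidueRing := unitBall K ⧸ unitBallMaxIdeal K

end UnitBall

namespace NAField

theorem isUltrametricDist (F : NAField K) : IsUltrametricDist K :=
  IsUltrametricDist.isUltrametricDist_of_isNonarchimedean_norm F.na

section Residue

variable (F : NAField K)

lemma one_lt_q_real : (1 : ℝ) < F.q := mod_cast F.one_lt_q

lemma q_pos : (0 : ℝ) < F.q := zero_lt_one.trans F.one_lt_q_real

lemma inv_q_pos : (0 : ℝ) < (F.q : ℝ)⁻¹ := inv_pos.2 F.q_pos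

lemma inv_q_lt_one : (F.q : ℝ)⁻¹ < 1 := inv_lt_one_of_one_lt₀ F.one_lt_q_real

lemma norm_le_inv_q_of_norm_lt_one {x : K} (hx : ‖x‖ < 1) : ‖x‖ ≤ (F.q : ℝ)⁻¹ := by
  rcases eq_or_ne x 0 with rfl | hx0
  · simp [F.inv_q_pos.le]
  obtain ⟨n, hn⟩ := F.valGroup x hx0
  have hn1 : n ≤ -1 := by
    rw [hn, ← zpow_zero (F.q : ℝ), zpow_lt_zpow_iff_right₀ F.one_lt_q_real] at hx
    omega
  rw [hn, ← zpow_neg_one]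
  exact zpow_le_zpow_right₀ F.one_lt_q_real.le hn1

lemma eq_of_mem_reps {s t : K} (hs : s ∈ F.reps) (ht : t ∈ F.reps)
    (h : ‖s - t‖ ≤ (F.q : ℝ)⁻¹) : s = t := by
  by_contra hne
  exact (F.reps_sep s hs t ht hne).not_ge h

variable [IsUltrametricDist K]

lemma residue_bijective :
    Function.Bijective fun s : F.reps =>
      Ideal.Quotient.mk (unitBallMaxIdeal K) ⟨s, F.norm_reps s s.2⟩ := by
  refine ⟨fun s t hst => Subtype.ext (F.eq_of_mem_reps s.2 t.2 ?_), fun x => ?_⟩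
  · exact F.norm_le_inv_q_of_norm_lt_one (Ideal.Quotient.eq.1 hst)
  · obtain ⟨x, rfl⟩ := Ideal.Quotient.mk_surjective x
    obtain ⟨s, hs, hxs⟩ := F.reps_cover x x.2
    exact ⟨⟨s, hs⟩, Ideal.Quotient.eq.2 <| by
      rw [mem_unitBallMaxIdeal, ← norm_neg]
      simpa using hxs.trans_lt F.inv_q_lt_one⟩

lemma card_residueRing : Nat.card (ResidueRing K) = F.q := by
  rw [← Nat.card_eq_of_bijective _ F.residue_bijective, Nat.card_eq_finsetCard, F.card_reps]

lemma finite_residueRing (F : NAField K) : Finite (ResidueRing K) :=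
  Nat.finite_of_card_ne_zero (F.card_residueRing ▸ (Nat.zero_lt_of_lt F.one_lt_q).ne')

lemma residue_pow_q (x : ResidueRing K) : x ^ F.q = x := by
  let _ : Field (ResidueRing K) := Ideal.Quotient.field _
  have := F.finite_residueRing
  have := Fintype.ofFinite (ResidueRing K)
  rw [← F.card_residueRing, Nat.card_eq_fintype_card]
  exact FiniteField.pow_card x

lemma residue_natCast_q : (F.q : ResidueRing K) = 0 := by
  have := F.finite_residueRing
  have := Fintype.ofFinite (ResidueRing K)
  rw [← F.card_residueRing, Nat.card_eq_fintype_card]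
  exact Nat.cast_card_eq_zero _

lemma norm_pow_q_sub_self_le {x : K} (hx : ‖x‖ ≤ 1) : ‖x ^ F.q - x‖ ≤ (F.q : ℝ)⁻¹ := by
  have h := F.residue_pow_q (Ideal.Quotient.mk (unitBallMaxIdeal K) ⟨x, hx⟩)
  rw [← map_pow, Ideal.Quotient.eq, mem_unitBallMaxIdeal] at h
  exact F.norm_le_inv_q_of_norm_lt_one h

lemma norm_pow_q_sub_pow_q_le {x y : K} (hx : ‖x‖ ≤ 1) (hy : ‖y‖ ≤ 1) (hxy : ‖x - y‖ < 1) :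
    ‖x ^ F.q - y ^ F.q‖ ≤ (F.q : ℝ)⁻¹ * ‖x - y‖ := by
  set x' : unitBall K := ⟨x, hx⟩
  set y' : unitBall K := ⟨y, hy⟩
  have hxy' : Ideal.Quotient.mk (unitBallMaxIdeal K) x' = Ideal.Quotient.mk _ y' :=
    Ideal.Quotient.eq.2 hxy
  -- modulo the maximal ideal, `∑ xⁱ y^(q-1-i)` becomes `q x^(q-1) = 0`
  have hS : ∑ i ∈ Finset.range F.q, x' ^ i * y' ^ (F.q - 1 - i) ∈ unitBallMaxIdeal K := by
    rw [← Ideal.Quotient.eq_zero_iff_mem, map_sum]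
    simp only [map_mul, map_pow, ← hxy']
    rw [geom_sum₂_self, F.residue_natCast_q, zero_mul]
  have hfac : x ^ F.q - y ^ F.q =
      ((∑ i ∈ Finset.range F.q, x' ^ i * y' ^ (F.q - 1 - i) : unitBall K) : K) * (x - y) := by
    rw [← geom_sum₂_mul]
    push_cast
    rfl
  rw [hfac, norm_mul]
  exact mul_le_mul_of_nonneg_right (F.norm_le_inv_q_of_norm_lt_one hS) (norm_nonneg _)

lemma norm_pow_q_sub_self_sub_eq {x y : K} (hx : ‖x‖ ≤ 1) (hy : ‖y‖ ≤ 1) (hxy : ‖x - y‖ < 1) :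
    ‖(x ^ F.q - x) - (y ^ F.q - y)‖ = ‖x - y‖ := by
  rcases eq_or_ne x y with rfl | hne
  · simp
  have hlt : ‖x ^ F.q - y ^ F.q‖ < ‖-(x - y)‖ := by
    rw [norm_neg]
    refine (F.norm_pow_q_sub_pow_q_le hx hy hxy).trans_lt ?_
    exact mul_lt_of_lt_one_left (norm_pos_iff.2 (sub_ne_zero.2 hne)) F.inv_q_lt_one
  rw [show (x ^ F.q - x) - (y ^ F.q - y) = (x ^ F.q - y ^ F.q) + -(x - y) by ring,
    IsUltrametricDist.norm_add_eq_max_of_norm_ne_norm hlt.ne, max_eq_right hlt.le, norm_neg]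

end Residue

section Orbit

/-- `u` lists the first coordinates of a bi-infinite orbit of `T` in `R²`, whose `k`-th point is
`(u k, u (k - 1))`. -/
structure IsOrbit (F : NAField K) (a b : K) (u : ℤ → K) : Prop where
  norm_le_one : ∀ k, ‖u k‖ ≤ 1
  succ_eq : ∀ k, u (k + 1) = a * u (k - 1) + b * (u k ^ F.q - u k)

variable {F : NAField K} {a b : K} {s u v : ℤ → K}

lemma IsOrbit.shift (hu : F.IsOrbit a b u) (N : ℤ) :
    F.IsOrbit a b fun k => u (k + N) where
  norm_le_one k := hu.norm_le_one _
  succ_eq k := by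
    simpa only [add_right_comm _ 1 N, sub_add_eq_add_sub] using hu.succ_eq (k + N)

lemma IsOrbit.iterate_Tmap (hu : F.IsOrbit a b u) (m : ℤ) (n : ℕ) :
    (F.Tmap a b)^[n] (u m, u (m - 1)) = (u (m + n), u (m + n - 1)) := by
  induction n with
  | zero => simp
  | succ n ih =>
    rw [Function.iterate_succ_apply', ih, NAField.Tmap]
    simp only [← hu.succ_eq, Nat.cast_succ, ← add_assoc, add_sub_cancel_right]

lemma IsOrbit.mem_attractor (hu : F.IsOrbit a b u) (m : ℤ) :
    (u m, u (m - 1)) ∈ F.Attractor a b := by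
  refine Set.mem_iInter₂.2 fun n _ => ⟨(u (m - n), u (m - n - 1)), ?_, ?_⟩
  · exact ⟨hu.norm_le_one _, hu.norm_le_one _⟩
  · rw [hu.iterate_Tmap, sub_add_cancel]

lemma IsOrbit.eq_of_eq_of_eq (hu : F.IsOrbit a b u) (hv : F.IsOrbit a b v)
    (h₀ : u 0 = v 0) (h₁ : u (-1) = v (-1)) (n : ℕ) : u n = v n := by
  have hun := hu.iterate_Tmap 0 n
  have hvn := hv.iterate_Tmap 0 n
  simp only [zero_sub, zero_add, h₀, h₁] at hun hvn
  exact congrArg Prod.fst (hun.symm.trans hvn)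

def Tperm (F : NAField K) (a b : K) (ha0 : a ≠ 0) : Equiv.Perm (K × K) where
  toFun := F.Tmap a b
  invFun := F.Tinv a b
  left_inv z := by simp [NAField.Tmap, NAField.Tinv, ha0]
  right_inv z := by simp [NAField.Tmap, NAField.Tinv, ha0]

lemma isOrbit_fst {v : ℤ → K × K} (hv : ∀ k, v (k + 1) = F.Tmap a b (v k))
    (hmem : ∀ k, v k ∈ unitPoly K) : F.IsOrbit a b fun k => (v k).1 where
  norm_le_one k := (hmem k).1
  succ_eq k := by
    have h := hv (k - 1)
    rw [sub_add_cancel] at h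
    rw [hv k, h]
    rfl

/-- Orbits are the fixed points of `orbitMap`, obtained by solving the recurrence for the middle
term; near any sequence in `R` it contracts by the factor `1/q`. -/
def orbitMap (F : NAField K) (a b : K) (u : ℤ → K) : ℤ → K :=
  fun k => u k ^ F.q - (u (k + 1) - a * u (k - 1)) / b

lemma continuous_orbitMap : Continuous (F.orbitMap a b) :=
  continuous_pi fun k => by unfold orbitMap; fun_prop

lemma isOrbit_of_orbitMap_eq (hb0 : b ≠ 0) (hu : ∀ k, ‖u k‖ ≤ 1) (h : F.orbitMap a b u = u) :
    F.IsOrbit a b u where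
  norm_le_one := hu
  succ_eq k := by
    have hk := congrFun h k
    simp only [orbitMap] at hk
    replace hk : (u (k + 1) - a * u (k - 1)) / b = u k ^ F.q - u k := by
      linear_combination -hk
    rw [div_eq_iff hb0] at hk
    linear_combination hk

variable [IsUltrametricDist K]

lemma mapsTo_Tmap_unitPoly (ha : ‖a‖ ≤ 1) (hb : ‖b‖ ≤ F.q) :
    Set.MapsTo (F.Tmap a b) (unitPoly K) (unitPoly K) := by
  rintro ⟨x, y⟩ ⟨hx, hy⟩
  refine ⟨(IsUltrametricDist.norm_add_le_max _ _).trans (max_le ?_ ?_), hx⟩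
  · rw [norm_mul]
    exact mul_le_one₀ ha (norm_nonneg _) hy
  · rw [norm_mul, ← mul_inv_cancel₀ F.q_pos.ne']
    exact mul_le_mul hb (F.norm_pow_q_sub_self_le hx) (norm_nonneg _) (Nat.cast_nonneg _)

lemma zpow_Tperm_apply_mem_unitPoly (ha0 : a ≠ 0) (ha : ‖a‖ ≤ 1) (hb : ‖b‖ ≤ F.q) {p : K × K}
    (hp : p ∈ F.Attractor a b) (k : ℤ) : (F.Tperm a b ha0 ^ k) p ∈ unitPoly K := by
  have hσ : ⇑(F.Tperm a b ha0) = F.Tmap a b := rfl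
  have hneg (n : ℕ) : (F.Tperm a b ha0 ^ (-n : ℤ)) p ∈ unitPoly K := by
    obtain ⟨z, hz, rfl⟩ := Set.mem_iInter₂.1 hp (n + 1) (Nat.le_add_left 1 n)
    rw [← hσ, ← Equiv.Perm.coe_pow, ← Equiv.Perm.mul_apply, zpow_neg, zpow_natCast, pow_succ,
      inv_mul_cancel_left]
    exact mapsTo_Tmap_unitPoly ha hb hz
  obtain ⟨n, rfl | rfl⟩ := Int.eq_nat_or_neg k
  · rw [zpow_natCast, Equiv.Perm.coe_pow, hσ]
    exact (mapsTo_Tmap_unitPoly ha hb).iterate n (by simpa using hneg 0)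
  · exact hneg n

lemma exists_isOrbit_of_mem_attractor (ha0 : a ≠ 0) (ha : ‖a‖ ≤ 1) (hb : ‖b‖ ≤ F.q)
    {p : K × K} (hp : p ∈ F.Attractor a b) : ∃ u, F.IsOrbit a b u ∧ (u 0, u (-1)) = p := by
  refine ⟨_, isOrbit_fst (v := fun k => (F.Tperm a b ha0 ^ k) p) (fun k => ?_)
    (zpow_Tperm_apply_mem_unitPoly ha0 ha hb hp), ?_⟩
  · rw [add_comm, zpow_one_add, Equiv.Perm.mul_apply]
    rfl
  · ext
    · simp
    · rw [zpow_neg_one]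
      rfl

lemma IsOrbit.q_mul_norm_sub_le (ha : ‖a‖ ≤ 1) (hb : ‖b‖ = F.q) (hu : F.IsOrbit a b u)
    (hv : F.IsOrbit a b v) (k : ℤ) (hk : ‖u k - v k‖ < 1) :
    F.q * ‖u k - v k‖ ≤ max ‖u (k + 1) - v (k + 1)‖ ‖u (k - 1) - v (k - 1)‖ := by
  have key : b * ((u k ^ F.q - u k) - (v k ^ F.q - v k)) =
      (u (k + 1) - v (k + 1)) - a * (u (k - 1) - v (k - 1)) := by
    rw [hu.succ_eq, hv.succ_eq]
    ring
  calc (F.q : ℝ) * ‖u k - v k‖ = ‖(u (k + 1) - v (k + 1)) - a * (u (k - 1) - v (k - 1))‖ := by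
        rw [← key, norm_mul, hb,
          F.norm_pow_q_sub_self_sub_eq (hu.norm_le_one k) (hv.norm_le_one k) hk]
    _ ≤ max ‖u (k + 1) - v (k + 1)‖ ‖a * (u (k - 1) - v (k - 1))‖ :=
        IsUltrametricDist.norm_sub_le_max _ _
    _ ≤ _ := by
        rw [norm_mul]
        exact max_le_max le_rfl (mul_le_of_le_one_left (norm_nonneg _) ha)

lemma IsOrbit.norm_sub_le_pow (ha : ‖a‖ ≤ 1) (hb : ‖b‖ = F.q) (hu : F.IsOrbit a b u)
    (hv : F.IsOrbit a b v) {M : ℕ} (hM : ∀ k : ℤ, |k| ≤ M → ‖u k - v k‖ ≤ (F.q : ℝ)⁻¹)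
    (j : ℕ) (k : ℤ) (hk : |k| + j ≤ M) : ‖u k - v k‖ ≤ (F.q : ℝ)⁻¹ ^ (j + 1) := by
  induction j generalizing k with
  | zero => simpa using hM k (by simpa using hk)
  | succ j ih =>
    have h := hu.q_mul_norm_sub_le ha hb hv k ((hM k (by omega)).trans_lt F.inv_q_lt_one)
    have h_next := ih (k + 1) (by have := abs_add_le k 1; simp only [abs_one] at this; omega)
    have h_prev := ih (k - 1) (by have := abs_sub k 1; simp only [abs_one] at this; omega)
    rw [pow_succ', le_inv_mul_iff₀ F.q_pos]
    exact h.trans (max_le h_next h_prev)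

lemma IsOrbit.eq_of_forall_norm_sub_le (ha : ‖a‖ ≤ 1) (hb : ‖b‖ = F.q) (hu : F.IsOrbit a b u)
    (hv : F.IsOrbit a b v) (h : ∀ k, ‖u k - v k‖ ≤ (F.q : ℝ)⁻¹) : u = v := by
  funext k
  have hle (j : ℕ) : ‖u k - v k‖ ≤ (F.q : ℝ)⁻¹ ^ (j + 1) :=
    hu.norm_sub_le_pow ha hb hv (M := (|k| + j).toNat) (fun k _ => h k) j k (by omega)
  have hlim := (tendsto_pow_atTop_nhds_zero_of_lt_one F.inv_q_pos.le F.inv_q_lt_one).comp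
    (tendsto_add_atTop_nat 1)
  simpa [sub_eq_zero] using ge_of_tendsto' hlim hle

lemma exists_window_norm_sub_lt (ha : ‖a‖ ≤ 1) (hb : ‖b‖ = F.q) {ε : ℝ} (hε : 0 < ε) :
    ∃ M : ℕ, ∀ ⦃u v : ℤ → K⦄, F.IsOrbit a b u → F.IsOrbit a b v →
      (∀ k : ℤ, |k| ≤ M → ‖u k - v k‖ ≤ (F.q : ℝ)⁻¹) →
        max ‖v 0 - u 0‖ ‖v (-1) - u (-1)‖ < ε := by
  obtain ⟨M, hM⟩ := exists_pow_lt_of_lt_one hε F.inv_q_lt_one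
  refine ⟨M + 1, fun u v hu hv h => ?_⟩
  have hlt (k : ℤ) (hk : |k| ≤ 1) : ‖v k - u k‖ < ε := by
    rw [norm_sub_rev]
    refine (hu.norm_sub_le_pow ha hb hv h M k (by push_cast; omega)).trans_lt ?_
    exact (pow_le_pow_of_le_one F.inv_q_pos.le F.inv_q_lt_one.le M.le_succ).trans_lt hM
  exact max_lt (hlt 0 (by simp)) (hlt (-1) (by simp))

lemma norm_le_one_of_near (F : NAField K) {x y : K} (hy : ‖y‖ ≤ 1)
    (hxy : ‖x - y‖ ≤ (F.q : ℝ)⁻¹) : ‖x‖ ≤ 1 := by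
  simpa using (IsUltrametricDist.norm_add_le_max (x - y) y).trans
    (max_le (hxy.trans F.inv_q_lt_one.le) hy)

lemma norm_sub_mul_div_le (ha : ‖a‖ ≤ 1) (hb : ‖b‖ = F.q) {x y : K} {c : ℝ} (hx : ‖x‖ ≤ c)
    (hy : ‖y‖ ≤ c) : ‖(x - a * y) / b‖ ≤ (F.q : ℝ)⁻¹ * c := by
  rw [norm_div, hb, div_eq_inv_mul]
  refine mul_le_mul_of_nonneg_left ((IsUltrametricDist.norm_sub_le_max _ _).trans
    (max_le hx ?_)) F.inv_q_pos.le
  rw [norm_mul]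
  exact (mul_le_of_le_one_left (norm_nonneg _) ha).trans hy

lemma orbitMap_near (ha : ‖a‖ ≤ 1) (hb : ‖b‖ = F.q) (hs : ∀ k, ‖s k‖ ≤ 1)
    (hu : ∀ k, ‖u k - s k‖ ≤ (F.q : ℝ)⁻¹) (k : ℤ) :
    ‖F.orbitMap a b u k - s k‖ ≤ (F.q : ℝ)⁻¹ := by
  have hu1 (k : ℤ) : ‖u k‖ ≤ 1 := F.norm_le_one_of_near (hs k) (hu k)
  rw [orbitMap, show ∀ x y z : K, x ^ F.q - z - y = (x ^ F.q - x) + (x - y) - z by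
    intro x y z; ring]
  refine (IsUltrametricDist.norm_sub_le_max _ _).trans (max_le ?_ ?_)
  · exact (IsUltrametricDist.norm_add_le_max _ _).trans
      (max_le (F.norm_pow_q_sub_self_le (hu1 k)) (hu k))
  · simpa using norm_sub_mul_div_le ha hb (hu1 (k + 1)) (hu1 (k - 1))

lemma orbitMap_sub_le (ha : ‖a‖ ≤ 1) (hb : ‖b‖ = F.q) (hu : ∀ k, ‖u k‖ ≤ 1)
    (hv : ∀ k, ‖v k‖ ≤ 1) {δ : ℝ} (hδ : δ < 1) (huv : ∀ k, ‖u k - v k‖ ≤ δ) (k : ℤ) :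
    ‖F.orbitMap a b u k - F.orbitMap a b v k‖ ≤ (F.q : ℝ)⁻¹ * δ := by
  rw [orbitMap, orbitMap, show ∀ x₁ x₂ y₁ y₂ z₁ z₂ : K,
      x₁ ^ F.q - (y₁ - a * z₁) / b - (x₂ ^ F.q - (y₂ - a * z₂) / b) =
        (x₁ ^ F.q - x₂ ^ F.q) - ((y₁ - y₂) - a * (z₁ - z₂)) / b by intros; ring]
  refine (IsUltrametricDist.norm_sub_le_max _ _).trans (max_le ?_ ?_)
  · exact (F.norm_pow_q_sub_pow_q_le (hu k) (hv k) ((huv k).trans_lt hδ)).trans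
      (mul_le_mul_of_nonneg_left (huv k) F.inv_q_pos.le)
  · exact norm_sub_mul_div_le ha hb (huv _) (huv _)

lemma iterate_orbitMap_near (ha : ‖a‖ ≤ 1) (hb : ‖b‖ = F.q) (hs : ∀ k, ‖s k‖ ≤ 1) (n : ℕ)
    (k : ℤ) : ‖(F.orbitMap a b)^[n] s k - s k‖ ≤ (F.q : ℝ)⁻¹ := by
  induction n generalizing k with
  | zero => simp [F.inv_q_pos.le]
  | succ n ih =>
    rw [Function.iterate_succ_apply']
    exact orbitMap_near ha hb hs ih k

lemma norm_iterate_orbitMap_succ_sub_le (ha : ‖a‖ ≤ 1) (hb : ‖b‖ = F.q)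
    (hs : ∀ k, ‖s k‖ ≤ 1) (n : ℕ) (k : ℤ) :
    ‖(F.orbitMap a b)^[n + 1] s k - (F.orbitMap a b)^[n] s k‖ ≤ (F.q : ℝ)⁻¹ ^ (n + 1) := by
  have hnorm (m : ℕ) (k : ℤ) : ‖(F.orbitMap a b)^[m] s k‖ ≤ 1 :=
    F.norm_le_one_of_near (hs k) (iterate_orbitMap_near ha hb hs m k)
  induction n generalizing k with
  | zero => simpa using iterate_orbitMap_near ha hb hs 1 k
  | succ n ih =>
    have h := orbitMap_sub_le ha hb (hnorm _) (hnorm _)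
      (pow_lt_one₀ F.inv_q_pos.le F.inv_q_lt_one n.succ_ne_zero) ih k
    rwa [← Function.iterate_succ_apply' (F.orbitMap a b) (n + 1),
      ← Function.iterate_succ_apply' (F.orbitMap a b) n, ← pow_succ'] at h

theorem exists_isOrbit_near (ha : ‖a‖ ≤ 1) (hb : ‖b‖ = F.q) (hs : ∀ k, ‖s k‖ ≤ 1) :
    ∃ u, F.IsOrbit a b u ∧ ∀ k, ‖u k - s k‖ ≤ (F.q : ℝ)⁻¹ := by
  have := F.complete
  have hb0 : b ≠ 0 := norm_ne_zero_iff.1 (hb ▸ F.q_pos.ne')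
  have hcauchy (k : ℤ) : CauchySeq fun n => (F.orbitMap a b)^[n] s k := by
    refine cauchySeq_of_le_geometric (F.q : ℝ)⁻¹ (F.q : ℝ)⁻¹ F.inv_q_lt_one fun n => ?_
    rw [dist_eq_norm, norm_sub_rev, ← pow_succ']
    exact norm_iterate_orbitMap_succ_sub_le ha hb hs n k
  choose u hu using fun k => cauchySeq_tendsto_of_complete (hcauchy k)
  have hnear (k : ℤ) : ‖u k - s k‖ ≤ (F.q : ℝ)⁻¹ :=
    le_of_tendsto' ((hu k).sub_const (s k)).norm (iterate_orbitMap_near ha hb hs · k)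
  have hfix : F.orbitMap a b u = u :=
    isFixedPt_of_tendsto_iterate (tendsto_pi_nhds.2 hu) continuous_orbitMap.continuousAt
  exact ⟨u, isOrbit_of_orbitMap_eq hb0 (fun k => F.norm_le_one_of_near (hs k) (hnear k)) hfix,
    hnear⟩

theorem IsOrbit.exists_periodic_near (ha : ‖a‖ ≤ 1) (hb : ‖b‖ = F.q) (hu : F.IsOrbit a b u)
    (M : ℕ) : ∃ w, F.IsOrbit a b w ∧ (∃ N : ℕ, 1 ≤ N ∧ Function.Periodic w N) ∧
      ∀ k : ℤ, |k| ≤ M → ‖u k - w k‖ ≤ (F.q : ℝ)⁻¹ := by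
  obtain ⟨g, hg, hgk⟩ := exists_periodic_eq_on_window M
  obtain ⟨w, hw, hws⟩ := exists_isOrbit_near ha hb (s := u ∘ g) fun k => hu.norm_le_one _
  -- `w` and its shift by the period both shadow the periodic sequence `u ∘ g`
  have hper : Function.Periodic w (2 * M + 1 : ℕ) := fun k => congrFun
    ((hw.shift _).eq_of_forall_norm_sub_le ha hb hw fun k =>
      IsUltrametricDist.norm_sub_le_of_le_of_le (hws _)
        (by rw [norm_sub_rev, Function.comp_apply, hg k]; exact hws k)) k
  refine ⟨w, hw, ⟨_, by omega, hper⟩, fun k hk => ?_⟩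
  have h := hws k
  rwa [Function.comp_apply, hgk k hk, norm_sub_rev] at h

theorem exists_isOrbit_forall_window (ha : ‖a‖ ≤ 1) (hb : ‖b‖ = F.q) :
    ∃ w, F.IsOrbit a b w ∧ ∀ u, F.IsOrbit a b u → ∀ M : ℕ,
      ∃ n : ℕ, ∀ k : ℤ, |k| ≤ M → ‖u k - w (k + n)‖ ≤ (F.q : ℝ)⁻¹ := by
  have : Nonempty F.reps :=
    (Finset.card_pos.1 (F.card_reps ▸ Nat.zero_lt_of_lt F.one_lt_q)).coe_sort
  obtain ⟨s, hs⟩ := exists_bisequence_forall_window (α := F.reps)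
  obtain ⟨w, hw, hws⟩ :=
    exists_isOrbit_near ha hb (s := fun k => (s k : K)) fun k => F.norm_reps _ (s k).2
  refine ⟨w, hw, fun u hu M => ?_⟩
  choose σ hσ hσu using fun k => F.reps_cover (u k) (hu.norm_le_one k)
  obtain ⟨n, hn⟩ := hs (fun k => ⟨σ k, hσ k⟩) M
  refine ⟨n, fun k hk => IsUltrametricDist.norm_sub_le_of_le_of_le (hσu k) ?_⟩
  rw [norm_sub_rev]
  simpa [hn k hk] using hws (k + n)

theorem not_countable_attractor (ha : ‖a‖ ≤ 1) (hb : ‖b‖ = F.q) :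
    ¬ (F.Attractor a b).Countable := by
  obtain ⟨r₀, hr₀, r₁, hr₁, hne⟩ := Finset.one_lt_card.1 (F.card_reps ▸ F.one_lt_q)
  set itin : Set ℕ → ℤ → K := fun S k => if k.toNat ∈ S then r₁ else r₀
  have hitin (S : Set ℕ) (k : ℤ) : itin S k ∈ F.reps := by
    simp only [itin]
    split_ifs <;> assumption
  choose w hw hws using fun S =>
    exists_isOrbit_near ha hb (s := itin S) fun k => F.norm_reps _ (hitin S k)
  -- the shadowing orbit of `itin S` determines `itin S`, hence `S`
  have hinj : Function.Injective fun S => (w S 0, w S (-1)) := by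
    intro S S' h
    ext n
    have hn := (hw S).eq_of_eq_of_eq (hw S') (congrArg Prod.fst h) (congrArg Prod.snd h) n
    have hitin_eq : itin S n = itin S' n := F.eq_of_mem_reps (hitin S n) (hitin S' n)
      (IsUltrametricDist.norm_sub_le_of_le_of_le (by rw [norm_sub_rev]; exact hws S n)
        (hn ▸ hws S' n))
    by_cases hS : n ∈ S <;> by_cases hS' : n ∈ S' <;> simp_all [itin]
  have : Uncountable (Set ℕ) :=
    uncountable_iff_forall_not_surjective.2 Function.cantor_surjective
  intro hC
  exact not_countable (Set.countable_univ_iff.1 <| Set.MapsTo.countable_of_injOn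
    (fun S _ => (hw S).mem_attractor 0) hinj.injOn hC)

end Orbit

end NAField

theorem stmt15 (F : NAField K) (a b : K) (ha0 : a ≠ 0) (ha : ‖a‖ < 1)
    (hb : ‖b‖ = (F.q : ℝ)) :
    (∀ p ∈ F.Attractor a b, ∀ ε : ℝ, 0 < ε →
        ∃ r ∈ F.Attractor a b, (∃ n : ℕ, 1 ≤ n ∧ (F.Tmap a b)^[n] r = r) ∧
          max ‖r.1 - p.1‖ ‖r.2 - p.2‖ < ε) ∧
    (∃ p₀ ∈ F.Attractor a b, ∀ p ∈ F.Attractor a b, ∀ ε : ℝ, 0 < ε →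
        ∃ n : ℕ, max ‖((F.Tmap a b)^[n] p₀).1 - p.1‖
          ‖((F.Tmap a b)^[n] p₀).2 - p.2‖ < ε) ∧
    ¬ (F.Attractor a b).Countable := by
  have := F.isUltrametricDist
  refine ⟨fun p hp ε hε => ?_, ?_, NAField.not_countable_attractor ha.le hb⟩
  · obtain ⟨u, hu, rfl⟩ := NAField.exists_isOrbit_of_mem_attractor ha0 ha.le hb.le hp
    obtain ⟨M, hM⟩ := NAField.exists_window_norm_sub_lt ha.le hb hε
    obtain ⟨w, hw, ⟨N, hN, hper⟩, hwu⟩ := hu.exists_periodic_near ha.le hb M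
    refine ⟨(w 0, w (0 - 1)), hw.mem_attractor 0, ⟨N, hN, ?_⟩, hM hu hw hwu⟩
    rw [hw.iterate_Tmap, hper 0, show (0 : ℤ) + N - 1 = 0 - 1 + N by ring, hper]
  · obtain ⟨w, hw, hwu⟩ := NAField.exists_isOrbit_forall_window ha.le hb
    refine ⟨_, hw.mem_attractor 0, fun p hp ε hε => ?_⟩
    obtain ⟨u, hu, rfl⟩ := NAField.exists_isOrbit_of_mem_attractor ha0 ha.le hb.le hp
    obtain ⟨M, hM⟩ := NAField.exists_window_norm_sub_lt ha.le hb hε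
    obtain ⟨n, hn⟩ := hwu u hu M
    refine ⟨n, ?_⟩
    rw [hw.iterate_Tmap, show (0 : ℤ) + n - 1 = -1 + n by ring]
    exact hM hu (hw.shift n) hn
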